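/- GMW XOR gate share uniformity: if (X₁, X₂) and (Y₁, Y₂) are additive sharings over F_2 such that X₂ is uniform and independent of (X₁+X₂, Y₁+Y₂, Y₂), then the share Z₂ := X₂ + Y₂ is uniform and independent of the true values (X₁+X₂, Y₁+Y₂). -/
import Mathlib


open Finset
open scoped Classical BigOperators

/-- Probability of an event under a pmf on a finite sample space. -/
noncomputable def pr {Ω : Type*} [Fintype Ω] (P : Ω → ℝ) (E : Ω → Prop) : ℝ :=
  ∑ ω, if E ω then P ω else 0

/-- Conditional probability of `E` given `F`. -/
noncomputable def cpr {Ω : Type*} [Fintype Ω] (P : Ω → ℝ) (E F : Ω → Prop) : ℝ :=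
  pr P (fun ω => E ω ∧ F ω) / pr P F

lemma pr_congr {Ω : Type*} [Fintype Ω] (P : Ω → ℝ) {E F : Ω → Prop}
    (h : ∀ ω, E ω ↔ F ω) : pr P E = pr P F := by
  unfold pr; exact Finset.sum_congr rfl fun ω _ => by simp [h ω]

lemma pr_partition {Ω α : Type*} [Fintype Ω] [Fintype α] (P : Ω → ℝ)
    (E : Ω → Prop) (f : Ω → α) :
    pr P E = ∑ a : α, pr P (fun ω => E ω ∧ f ω = a) := by
  unfold pr
  rw [Finset.sum_comm]
  refine Finset.sum_congr rfl fun ω _ => ?_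
  by_cases h : E ω <;> simp [h]

lemma zmod2_aux : ∀ x y b : ZMod 2, (x + y = b ↔ x = b + y) := by decide

/-- GMW XOR gate share uniformity. -/
theorem gmw_xor_share_uniform {Ω : Type*} [Fintype Ω] (P : Ω → ℝ)
    (hP0 : ∀ ω, 0 ≤ P ω) (hP1 : ∑ ω, P ω = 1)
    (X₁ X₂ Y₁ Y₂ : Ω → ZMod 2)
    (hX₂ : ∀ v : ZMod 2, pr P (fun ω => X₂ ω = v) = 1 / 2)
    (hindep : ∀ (t : ZMod 2 × ZMod 2 × ZMod 2) (b : ZMod 2),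
      pr P (fun ω => (X₁ ω + X₂ ω, Y₁ ω + Y₂ ω, Y₂ ω) = t ∧ X₂ ω = b)
        = pr P (fun ω => (X₁ ω + X₂ ω, Y₁ ω + Y₂ ω, Y₂ ω) = t)
          * pr P (fun ω => X₂ ω = b)) :
    (∀ v : ZMod 2, pr P (fun ω => X₂ ω + Y₂ ω = v) = 1 / 2) ∧
    (∀ (t : ZMod 2 × ZMod 2) (b : ZMod 2),
      pr P (fun ω => (X₁ ω + X₂ ω, Y₁ ω + Y₂ ω) = t ∧ X₂ ω + Y₂ ω = b)
        = pr P (fun ω => (X₁ ω + X₂ ω, Y₁ ω + Y₂ ω) = t)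
          * pr P (fun ω => X₂ ω + Y₂ ω = b)) := by
  -- total probability over triples is 1
  have htot : ∑ t : ZMod 2 × ZMod 2 × ZMod 2,
      pr P (fun ω => (X₁ ω + X₂ ω, Y₁ ω + Y₂ ω, Y₂ ω) = t) = 1 := by
    have h := pr_partition P (fun _ => True)
        (fun ω => (X₁ ω + X₂ ω, Y₁ ω + Y₂ ω, Y₂ ω))
    have h1 : pr P (fun _ => True) = 1 := by unfold pr; simpa using hP1
    rw [h1] at h
    rw [h]
    exact Finset.sum_congr rfl fun t _ => pr_congr P fun ω => by simp
  -- uniformity of Z₂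
  have hZ : ∀ b : ZMod 2, pr P (fun ω => X₂ ω + Y₂ ω = b) = 1 / 2 := by
    intro b
    rw [pr_partition P _ (fun ω => (X₁ ω + X₂ ω, Y₁ ω + Y₂ ω, Y₂ ω))]
    have step : ∀ t : ZMod 2 × ZMod 2 × ZMod 2,
        pr P (fun ω => X₂ ω + Y₂ ω = b ∧ (X₁ ω + X₂ ω, Y₁ ω + Y₂ ω, Y₂ ω) = t)
          = pr P (fun ω => (X₁ ω + X₂ ω, Y₁ ω + Y₂ ω, Y₂ ω) = t) * (1 / 2) := by
      intro t
      have hc : ∀ ω, (X₂ ω + Y₂ ω = b ∧ (X₁ ω + X₂ ω, Y₁ ω + Y₂ ω, Y₂ ω) = t) ↔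
          ((X₁ ω + X₂ ω, Y₁ ω + Y₂ ω, Y₂ ω) = t ∧ X₂ ω = b + t.2.2) := by
        intro ω
        constructor
        · rintro ⟨hz, ht⟩
          refine ⟨ht, ?_⟩
          have hy : Y₂ ω = t.2.2 := by rw [← ht]
          rw [← hy]
          exact (zmod2_aux _ _ _).mp hz
        · rintro ⟨ht, hx⟩
          refine ⟨?_, ht⟩
          have hy : Y₂ ω = t.2.2 := by rw [← ht]
          rw [hy]
          exact (zmod2_aux _ _ _).mpr hx
      rw [pr_congr P hc, hindep t (b + t.2.2), hX₂]
    rw [Finset.sum_congr rfl fun t _ => step t, ← Finset.sum_mul, htot, one_mul]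
  refine ⟨hZ, ?_⟩
  intro t b
  rw [hZ b]
  -- decompose the pair event onto fibers of Y₂
  rw [pr_partition P _ Y₂]
  have step : ∀ y : ZMod 2,
      pr P (fun ω => ((X₁ ω + X₂ ω, Y₁ ω + Y₂ ω) = t ∧ X₂ ω + Y₂ ω = b) ∧ Y₂ ω = y)
        = pr P (fun ω => (X₁ ω + X₂ ω, Y₁ ω + Y₂ ω, Y₂ ω) = (t.1, t.2, y)) * (1 / 2) := by
    intro y
    have hc : ∀ ω, (((X₁ ω + X₂ ω, Y₁ ω + Y₂ ω) = t ∧ X₂ ω + Y₂ ω = b) ∧ Y₂ ω = y) ↔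
        ((X₁ ω + X₂ ω, Y₁ ω + Y₂ ω, Y₂ ω) = (t.1, t.2, y) ∧ X₂ ω = b + y) := by
      intro ω
      simp only [Prod.ext_iff]
      constructor
      · rintro ⟨⟨⟨h1, h2⟩, h3⟩, h4⟩
        subst h4
        exact ⟨⟨h1, h2, rfl⟩, (zmod2_aux _ _ _).mp h3⟩
      · rintro ⟨⟨h1, h2, h4⟩, h3⟩
        subst h4
        exact ⟨⟨⟨h1, h2⟩, (zmod2_aux _ _ _).mpr h3⟩, rfl⟩
    rw [pr_congr P hc, hindep (t.1, t.2, y) (b + y), hX₂]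
  rw [Finset.sum_congr rfl fun y _ => step y, ← Finset.sum_mul]
  congr 1
  rw [pr_partition P _ Y₂]
  exact Finset.sum_congr rfl fun y _ => (pr_congr P fun ω => by
    simp only [Prod.ext_iff]; tauto).symm
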